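/- arXiv:2204.11298 — 7 statements merged into one kernel-verified Lean document; each statement's English description precedes it below -/
import Mathlib

section
/- For every function α : ℕ → ℕ and every n > 0, there exists an index i ≤ Σ_{j=0}^{n-1} α(j) such that α(i) ≤ α(i+n). -/
private lemma herm (n : ℕ) (hn : 0 < n) : ∀ m : ℕ, ∑ t ∈ Finset.range n, (m + t) / n = m := by
  intro m
  induction m with
  | zero =>
    rw [Finset.sum_eq_zero]
    intro t ht
    simp only [Nat.zero_add]
    exact Nat.div_eq_of_lt (Finset.mem_range.mp ht)
  | succ m ih =>
    have h1 := Finset.sum_range_succ' (fun t => (m + t) / n) n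
    have h2 := Finset.sum_range_succ (fun t => (m + t) / n) n
    have h3 : (m + n) / n = m / n + 1 := Nat.add_div_right m hn
    have h4 : ∑ t ∈ Finset.range n, (m + 1 + t) / n
        = ∑ t ∈ Finset.range n, (m + (t + 1)) / n := by
      apply Finset.sum_congr rfl
      intro t _
      ring_nf
    simp only [Nat.add_zero] at h1 h2
    rw [h4]
    omega

private lemma chain (α : ℕ → ℕ) (n S : ℕ) (hc : ∀ i ≤ S, α (i + n) < α i) :
    ∀ k j, j + k * n ≤ S + n → α (j + k * n) + k ≤ α j := by
  intro k
  induction k with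
  | zero => intro j _; simp
  | succ k ih =>
    intro j hj
    rw [Nat.succ_mul] at hj
    have hjS : j ≤ S := by
      have hn : k * n + n ≥ n := Nat.le_add_left n (k * n)
      omega
    have h1 := ih (j + n) (by omega)
    have h2 := hc j hjS
    have h3 : j + n + k * n = j + (k + 1) * n := by ring
    rw [h3] at h1
    omega

theorem dl_distance_n : ∀ (α : ℕ → ℕ) (n : ℕ), 0 < n →
    ∃ i, i ≤ (∑ j ∈ Finset.range n, α j) ∧ α i ≤ α (i + n) := by
  intro α n hn
  set S := ∑ j ∈ Finset.range n, α j with hS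
  by_contra hcon
  push_neg at hcon
  have hc : ∀ i ≤ S, α (i + n) < α i := fun i hi => hcon i hi
  -- there is no j < n with j + n * α j ≤ S
  have h2 : ∀ j < n, S + 1 ≤ j + n * α j := by
    intro j hjn
    by_contra hle
    push_neg at hle
    have hb : j + (α j + 1) * n ≤ S + n := by
      have he : (α j + 1) * n = n * α j + n := by ring
      omega
    have hx := chain α n S hc (α j + 1) j hb
    omega
  -- hence α j ≥ (S + n - j) / n for all j < n
  have hb : ∀ j < n, (S + n - j) / n ≤ α j := by
    intro j hjn
    have h := h2 j hjn
    rw [Nat.div_le_iff_le_mul_add_pred hn]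
    have : n * α j = α j * n := by ring
    omega
  -- sum up: S ≥ ∑_{j<n} (S+n-j)/n = ∑_{t<n} (S+1+t)/n = S+1
  have hsum : ∑ j ∈ Finset.range n, (S + n - j) / n ≤ S := by
    rw [hS]
    exact Finset.sum_le_sum fun j hj => hb j (Finset.mem_range.mp hj)
  have hrefl : ∑ j ∈ Finset.range n, (S + n - j) / n
      = ∑ j ∈ Finset.range n, (S + 1 + j) / n := by
    rw [← Finset.sum_range_reflect (fun j => (S + 1 + j) / n) n]
    apply Finset.sum_congr rfl
    intro j hj
    have hjn := Finset.mem_range.mp hj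
    congr 1
    omega
  have hherm := herm n hn (S + 1)
  omega
end

section
/- There is no family (αₙ)ₙ of functions ℕ → ℕ, where αₙ is the sequence (n, n−1, ..., 1, n+1, n+2, n+3, ...), admitting a pair of indices i < j good for all αₙ simultaneously; concretely: defining αₙ(m) = n − m if m < n and αₙ(m) = m + 1 if m ≥ n, for all i < j there exists n ≥ 1 with αₙ(i) > αₙ(j). -/
theorem dl_inf_2_fails (α : ℕ → ℕ → ℕ)
    (hα : ∀ n m, α n m = if m < n then n - m else m + 1) :
    ∀ i j : ℕ, i < j → ∃ n : ℕ, 1 ≤ n ∧ α n j < α n i := by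
  intro i j hij
  refine ⟨j + 1, by omega, ?_⟩
  rw [hα, hα]
  simp only [Nat.lt_succ_iff, le_refl, if_pos, Nat.le_of_lt hij]
  omega
end

section
/- Let M, l be natural numbers with l > 1 and let α, β : ℕ → ℕ. Then either there exist indices n₁ < n₂ < ... < n_l such that α(n₁) = ... = α(n_l) < M or β(n₁) = ... = β(n_l) < M, or there exist n, m ∈ ℕ such that M ≤ α(n) ≤ β(m) or M ≤ β(n) ≤ α(m). -/
open Filter

theorem exists_strictMono_comp_eq_const {β : Type*} [Finite β] (f : ℕ → β) :
    ∃ c, ∃ φ : ℕ → ℕ, StrictMono φ ∧ ∀ n, f (φ n) = c := by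
  obtain ⟨c, hc⟩ := Finite.exists_infinite_fiber f
  have hfreq : ∃ᶠ n in atTop, f n = c :=
    Nat.frequently_atTop_iff_infinite.mpr (Set.infinite_coe_iff.mp hc)
  exact ⟨c, extraction_of_frequently_atTop hfreq⟩

theorem exists_strictMono_fin_comp_eq_const_of_forall_lt {M : ℕ} (l : ℕ) {f : ℕ → ℕ}
    (hf : ∀ n, f n < M) :
    ∃ g : Fin l → ℕ, StrictMono g ∧ ∃ c, c < M ∧ ∀ s : Fin l, f (g s) = c := by
  obtain ⟨c, φ, hφ, hφc⟩ := exists_strictMono_comp_eq_const fun n ↦ (⟨f n, hf n⟩ : Fin M)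
  exact ⟨φ ∘ Fin.val, hφ.comp Fin.val_strictMono, c, c.isLt, fun s ↦ congrArg Fin.val (hφc s)⟩

theorem disjunction_lemma_general (M l : ℕ) (α β : ℕ → ℕ) :
    (∃ g : Fin l → ℕ, StrictMono g ∧
      ((∃ c, c < M ∧ ∀ s : Fin l, α (g s) = c) ∨
       (∃ c, c < M ∧ ∀ s : Fin l, β (g s) = c))) ∨
    (∃ n m : ℕ, (M ≤ α n ∧ α n ≤ β m) ∨ (M ≤ β n ∧ β n ≤ α m)) := by
  by_cases hα : ∀ n, α n < M
  · obtain ⟨g, hg, hc⟩ := exists_strictMono_fin_comp_eq_const_of_forall_lt l hα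
    exact Or.inl ⟨g, hg, Or.inl hc⟩
  by_cases hβ : ∀ n, β n < M
  · obtain ⟨g, hg, hc⟩ := exists_strictMono_fin_comp_eq_const_of_forall_lt l hβ
    exact Or.inl ⟨g, hg, Or.inr hc⟩
  simp only [not_forall, not_lt] at hα hβ
  obtain ⟨n, hn⟩ := hα
  obtain ⟨m, hm⟩ := hβ
  rcases le_total (α n) (β m) with h | h
  · exact Or.inr ⟨n, m, Or.inl ⟨hn, h⟩⟩
  · exact Or.inr ⟨m, n, Or.inr ⟨hm, h⟩⟩

theorem disjunction_lemma (M l : ℕ) (hl : 1 < l) (α β : ℕ → ℕ) :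
    (∃ g : Fin l → ℕ, StrictMono g ∧
      ((∃ c, c < M ∧ ∀ s : Fin l, α (g s) = c) ∨
       (∃ c, c < M ∧ ∀ s : Fin l, β (g s) = c))) ∨
    (∃ n m : ℕ, (M ≤ α n ∧ α n ≤ β m) ∨ (M ≤ β n ∧ β n ≤ α m)) :=
  disjunction_lemma_general M l α β
end

section
/- For every l > 1, every m ∈ ℕ, and every function f : ℕ × ℕ → ℕ, there exist pairs (i₁,j₁), ..., (i_l,j_l) in ℕ × ℕ with all coordinates ≥ m, such that f(i_r, j_r) ≤ f(i_{r+1}, j_{r+1}) for all 1 ≤ r ≤ l−1, and (i_r, j_r) ≰ (i_s, j_s) for all 1 ≤ r < s ≤ l. -/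
theorem one_step_unprovability_1l (l : ℕ) (hl : 1 < l) (m : ℕ) (f : ℕ × ℕ → ℕ) :
    ∃ p : ℕ → ℕ × ℕ,
      (∀ r, r < l → m ≤ (p r).1 ∧ m ≤ (p r).2) ∧
      (∀ r, r + 1 < l → f (p r) ≤ f (p (r + 1))) ∧
      (∀ r s, r < s → s < l → ¬ ((p r).1 ≤ (p s).1 ∧ (p r).2 ≤ (p s).2)) := by
  set g : Fin l → ℕ × ℕ := fun k => (m + (k : ℕ), m + (l - (k : ℕ))) with hg
  set σ := Tuple.sort (f ∘ g) with hσ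
  refine ⟨fun r => if h : r < l then g (σ ⟨r, h⟩) else (m, m), ?_, ?_, ?_⟩
  · intro r hr
    simp only [dif_pos hr, hg]
    exact ⟨Nat.le_add_right _ _, Nat.le_add_right _ _⟩
  · intro r hr
    have hr' : r < l := by omega
    simp only [dif_pos hr, dif_pos hr']
    have := Tuple.monotone_sort (f ∘ g) (a := ⟨r, hr'⟩) (b := ⟨r + 1, hr⟩) (by simp)
    simpa using this
  · intro r s hrs hs hle
    have hr : r < l := by omega
    have hne : σ ⟨r, hr⟩ ≠ σ ⟨s, hs⟩ := by
      intro h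
      have := σ.injective h
      simp [Fin.ext_iff] at this
      omega
    have h1 : ((σ ⟨r, hr⟩ : Fin l) : ℕ) < l := (σ ⟨r, hr⟩).isLt
    have h2 : ((σ ⟨s, hs⟩ : Fin l) : ℕ) < l := (σ ⟨s, hs⟩).isLt
    have hne' : ((σ ⟨r, hr⟩ : Fin l) : ℕ) ≠ ((σ ⟨s, hs⟩ : Fin l) : ℕ) :=
      fun h => hne (Fin.ext h)
    simp only [dif_pos hr, dif_pos hs, hg] at hle
    omega
end

section
/- For every l > 2, there is no function f : ℕ × ℕ → ℕ such that for all (i₁,j₁), ..., (i_l,j_l) ∈ ℕ × ℕ, if f(i_r,j_r) ≤ f(i_{r+1},j_{r+1}) for all 1 ≤ r ≤ l−1, then (i_r,j_r) ≤ (i_s,j_s) for some 1 ≤ r < s ≤ l. -/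
theorem dl_1l_not_proves_dl_22 (l : ℕ) (hl : 2 < l) :
    ¬ ∃ f : ℕ × ℕ → ℕ, ∀ p : ℕ → ℕ × ℕ,
      (∀ r, r + 1 < l → f (p r) ≤ f (p (r + 1))) →
      ∃ r s, r < s ∧ s < l ∧ (p r).1 ≤ (p s).1 ∧ (p r).2 ≤ (p s).2 := by
  rintro ⟨f, hf⟩
  set g : Fin l → ℕ × ℕ := fun i => ((i : ℕ), l - (i : ℕ)) with hg
  set σ := Tuple.sort (f ∘ g) with hσ
  set p : ℕ → ℕ × ℕ := fun r => if h : r < l then g (σ ⟨r, h⟩) else (0, 0) with hp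
  obtain ⟨r, s, hrs, hsl, h1, h2⟩ := hf p (by
    intro r hr
    have hr1 : r < l := Nat.lt_of_succ_lt hr
    have := Tuple.monotone_sort (f ∘ g)
      (a := ⟨r, hr1⟩) (b := ⟨r + 1, hr⟩) (by simp [Fin.le_def])
    simpa [hp, hr1, hr] using this)
  have hrl : r < l := lt_trans hrs hsl
  have hne : (σ ⟨r, hrl⟩ : ℕ) ≠ (σ ⟨s, hsl⟩ : ℕ) := by
    intro h
    have := σ.injective (Fin.ext h)
    exact absurd (congrArg Fin.val this) (Nat.ne_of_lt hrs)
  simp only [hp, dif_pos hrl, dif_pos hsl, hg] at h1 h2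
  have ha : ((σ ⟨r, hrl⟩ : Fin l) : ℕ) < l := (σ ⟨r, hrl⟩).isLt
  have hb : ((σ ⟨s, hsl⟩ : Fin l) : ℕ) < l := (σ ⟨s, hsl⟩).isLt
  omega
end

section
/- For all functions f₁, f₂ : ℕ³ → ℕ, there exist triples (n₁,n₂,n₃), (m₁,m₂,m₃) ∈ ℕ³ such that f₁(n₁,n₂,n₃) ≤ f₁(m₁,m₂,m₃), f₂(n₁,n₂,n₃) ≤ f₂(m₁,m₂,m₃), and (n₁,n₂,n₃) ≰ (m₁,m₂,m₃) in the pointwise order. -/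
theorem one_step_unprovability_22 (f₁ f₂ : ℕ → ℕ → ℕ → ℕ) :
    ∃ n₁ n₂ n₃ m₁ m₂ m₃ : ℕ,
      f₁ n₁ n₂ n₃ ≤ f₁ m₁ m₂ m₃ ∧
      f₂ n₁ n₂ n₃ ≤ f₂ m₁ m₂ m₃ ∧
      ¬ (n₁ ≤ m₁ ∧ n₂ ≤ m₂ ∧ n₃ ≤ m₃) := by
  by_contra hc
  push_neg at hc
  set a := f₁ 0 0 1 with ha
  set b := f₂ 0 0 1 with hb
  set N := a + b + 1 with hN
  -- each point (i, N-i, 0) is incomparable to (0,0,1), so its image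
  -- cannot dominate (a, b)
  have key : ∀ i, i ≤ N → f₁ i (N - i) 0 < a ∨ f₂ i (N - i) 0 < b := by
    intro i hi
    by_contra h
    push_neg at h
    have := hc 0 0 1 i (N - i) 0 h.1 h.2
    omega
  set G : ℕ → ℕ := fun i =>
    if f₁ i (N - i) 0 < a then f₁ i (N - i) 0 else a + f₂ i (N - i) 0 with hG
  have hmem : ∀ i ∈ Finset.range (N + 1), G i ∈ Finset.range (a + b) := by
    intro i hi
    simp only [Finset.mem_range] at hi ⊢
    by_cases h1 : f₁ i (N - i) 0 < a
    · simp only [hG, if_pos h1]; omega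
    · have h2 : f₂ i (N - i) 0 < b := (key i (by omega)).resolve_left h1
      simp only [hG, if_neg h1]; omega
  have inj : Set.InjOn G ↑(Finset.range (N + 1)) := by
    intro i hi j hj hij
    simp only [Finset.coe_range, Set.mem_Iio] at hi hj
    by_contra hne
    by_cases h1 : f₁ i (N - i) 0 < a <;> by_cases h2 : f₁ j (N - j) 0 < a
    · simp only [hG, if_pos h1, if_pos h2] at hij
      rcases le_total (f₂ i (N - i) 0) (f₂ j (N - j) 0) with hle | hle
      · have := hc i (N - i) 0 j (N - j) 0 (le_of_eq hij) hle
        omega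
      · have := hc j (N - j) 0 i (N - i) 0 (le_of_eq hij.symm) hle
        omega
    · simp only [hG, if_pos h1, if_neg h2] at hij
      omega
    · simp only [hG, if_neg h1, if_pos h2] at hij
      omega
    · simp only [hG, if_neg h1, if_neg h2] at hij
      have hij2 : f₂ i (N - i) 0 = f₂ j (N - j) 0 := by omega
      rcases le_total (f₁ i (N - i) 0) (f₁ j (N - j) 0) with hle | hle
      · have := hc i (N - i) 0 j (N - j) 0 hle (le_of_eq hij2)
        omega
      · have := hc j (N - j) 0 i (N - i) 0 hle (le_of_eq hij2.symm)
        omega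
  have hcard := Finset.card_le_card_of_injOn G hmem inj
  simp only [Finset.card_range] at hcard
  omega
end

section
/- There is no pair of functions f₁, f₂ : ℕ³ → ℕ such that for all triples (n₁,n₂,n₃), (m₁,m₂,m₃) ∈ ℕ³, if f₁(n₁,n₂,n₃) ≤ f₁(m₁,m₂,m₃) and f₂(n₁,n₂,n₃) ≤ f₂(m₁,m₂,m₃), then (n₁,n₂,n₃) ≤ (m₁,m₂,m₃). -/
/-!
Suppose `f₁, f₂` reflect the order and let `cᵢ = fᵢ(0,0,1)`. Every point `x` of the antichain
`{(i, n - i, 0) | i ≤ n}` is incomparable with `(0,0,1)`, so `f₁ x < c₁` or `f₂ x < c₂`.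
On an antichain both `f₁` and `f₂` are injective (equal `f₁`-values would make two points
comparable through `f₂`), so at most `c₁` points satisfy the first alternative and at most `c₂`
the second. Taking `n = c₁ + c₂` gives `n + 1` points, a contradiction.
-/

open Finset

lemma injOn_of_isAntichain_of_reflect_le {α β : Type*} [LE α] [LinearOrder β] {f₁ f₂ : α → β}
    (hf : ∀ a b, f₁ a ≤ f₁ b → f₂ a ≤ f₂ b → a ≤ b) {s : Set α}
    (hs : IsAntichain (· ≤ ·) s) : s.InjOn f₁ := by
  intro a ha b hb hab
  by_contra hne
  rcases le_total (f₂ a) (f₂ b) with h | h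
  · exact hs ha hb hne (hf a b hab.le h)
  · exact hs hb ha (Ne.symm hne) (hf b a hab.ge h)

lemma card_filter_lt_le_of_injOn {α : Type*} {s : Finset α} {g : α → ℕ}
    (hg : (s : Set α).InjOn g) (c : ℕ) : #{x ∈ s | g x < c} ≤ c := by
  simpa using card_le_card_of_injOn g (t := range c)
    (fun x hx => by simpa using (mem_filter.1 hx).2) (hg.mono fun _ hx => (mem_filter.1 hx).1)

lemma card_le_add_of_isAntichain_of_reflect_le {α : Type*} [LE α] {f₁ f₂ : α → ℕ}
    (hf : ∀ a b, f₁ a ≤ f₁ b → f₂ a ≤ f₂ b → a ≤ b) {s : Finset α}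
    (hs : IsAntichain (· ≤ ·) (s : Set α)) {c₁ c₂ : ℕ}
    (hbelow : ∀ x ∈ s, f₁ x < c₁ ∨ f₂ x < c₂) : #s ≤ c₁ + c₂ := by
  classical
  calc #s ≤ #({x ∈ s | f₁ x < c₁} ∪ {x ∈ s | f₂ x < c₂}) :=
        card_le_card fun x hx => by simpa [hx] using hbelow x hx
    _ ≤ #{x ∈ s | f₁ x < c₁} + #{x ∈ s | f₂ x < c₂} := card_union_le _ _
    _ ≤ c₁ + c₂ := add_le_add
        (card_filter_lt_le_of_injOn (injOn_of_isAntichain_of_reflect_le hf hs) c₁)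
        (card_filter_lt_le_of_injOn
          (injOn_of_isAntichain_of_reflect_le (fun a b h₂ h₁ => hf a b h₁ h₂) hs) c₂)

lemma isAntichain_antidiagonal (n : ℕ) :
    IsAntichain (· ≤ ·) (antidiagonal n : Set (ℕ × ℕ)) := by
  intro a ha b hb hne hle
  simp only [mem_coe, HasAntidiagonal.mem_antidiagonal] at ha hb
  obtain ⟨h₁, h₂⟩ := hle
  exact hne (Prod.ext (by omega) (by omega))

theorem dl_22_not_proves_dl_32 :
    ¬ ∃ f₁ f₂ : ℕ → ℕ → ℕ → ℕ, ∀ n₁ n₂ n₃ m₁ m₂ m₃ : ℕ,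
      f₁ n₁ n₂ n₃ ≤ f₁ m₁ m₂ m₃ → f₂ n₁ n₂ n₃ ≤ f₂ m₁ m₂ m₃ →
      (n₁ ≤ m₁ ∧ n₂ ≤ m₂ ∧ n₃ ≤ m₃) := by
  rintro ⟨f₁, f₂, hf⟩
  set c₁ := f₁ 0 0 1
  set c₂ := f₂ 0 0 1
  have hplane : ∀ x y : ℕ × ℕ, f₁ x.1 x.2 0 ≤ f₁ y.1 y.2 0 → f₂ x.1 x.2 0 ≤ f₂ y.1 y.2 0 →
      x ≤ y := fun x y h₁ h₂ =>
    have hxy := hf _ _ _ _ _ _ h₁ h₂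
    Prod.mk_le_mk.2 ⟨hxy.1, hxy.2.1⟩
  have hbelow : ∀ x ∈ antidiagonal (c₁ + c₂), f₁ x.1 x.2 0 < c₁ ∨ f₂ x.1 x.2 0 < c₂ := by
    intro x _
    by_contra! h
    exact absurd (hf 0 0 1 x.1 x.2 0 h.1 h.2).2.2 (by norm_num)
  have hcard := card_le_add_of_isAntichain_of_reflect_le hplane (isAntichain_antidiagonal _) hbelow
  rw [Nat.card_antidiagonal] at hcard
  omega
end
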